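/- Let F be a set of functions f : Λ → {-1,1}^n and fix inputs λ_1,...,λ_m ∈ Λ and labels x_1,...,x_m ∈ {-1,1}^n. Then the empirical Rademacher complexity of the loss class {(λ,x) ↦ d_H(f(λ),x)/n : f ∈ F} is at most (1/(2n)) * sum_{j=1}^n R_m(F[j]), where R_m(F[j]) = E_σ[sup_{f∈F} (1/m) sum_{i=1}^m σ_i f(λ_i)[j]] is the bit-wise Rademacher complexity of the j-th output coordinate and σ_i are i.i.d. Rademacher random variables. -/

import Mathlib

/-!
For ±1 values `𝟙[a ≠ b] = (1 - a b) / 2`, so the normalised Hamming loss of `f` at `(λ, x)` is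
`1/2 - (1/2n) ∑ⱼ xⱼ f(λ)ⱼ`, an affine function of the output bits. The supremum of a sum is at most
the sum of the suprema; the constant part averages to zero over `σ`, and multiplying each `σᵢ` by
the fixed sign `-xᵢⱼ` permutes the sign vectors, so the `j`-th term averages to exactly the
bit-wise Rademacher complexity of `F[j]`.
-/

open Finset

/-- The ±1 value of a Boolean sign. -/
def sgn (b : Bool) : ℝ := if b then 1 else -1

lemma sgn_not (b : Bool) : sgn (!b) = -sgn b := by cases b <;> simp [sgn]

lemma abs_sgn (b : Bool) : |sgn b| = 1 := by cases b <;> simp [sgn]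

lemma sum_mul_sgn_eq {ι : Type*} [Fintype ι] [DecidableEq ι] (ε : ι → ℝ)
    (hε : ∀ i, ε i = 1 ∨ ε i = -1) (G : (ι → ℝ) → ℝ) :
    ∑ σ : ι → Bool, G (fun i => ε i * sgn (σ i)) = ∑ σ : ι → Bool, G (fun i => sgn (σ i)) := by
  classical
  let flip : (ι → Bool) → ι → Bool := fun σ i => if ε i = 1 then σ i else !σ i
  have hflip : Function.Involutive flip := fun σ => funext fun i => by
    by_cases h : ε i = 1 <;> simp [flip, h]
  refine Fintype.sum_equiv hflip.toPerm (fun σ => G (fun i => ε i * sgn (σ i)))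
    (fun σ => G (fun i => sgn (σ i))) fun σ => congrArg G (funext fun i => ?_)
  rcases hε i with h | h <;> norm_num [flip, h, sgn_not]

lemma sum_sgn_eq_zero {ι : Type*} [Fintype ι] [DecidableEq ι] (i : ι) :
    ∑ σ : ι → Bool, sgn (σ i) = 0 := by
  have h := sum_mul_sgn_eq (fun _ => -1) (fun _ => Or.inr rfl) (fun v => v i)
  simp only [neg_one_mul, sum_neg_distrib] at h
  linarith

lemma hammingDist_eq_sum_of_sign {ι : Type*} [Fintype ι] {a b : ι → ℝ}
    (ha : ∀ j, a j = 1 ∨ a j = -1) (hb : ∀ j, b j = 1 ∨ b j = -1) :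
    (hammingDist a b : ℝ) = ∑ j, (1 - b j * a j) / 2 := by
  rw [hammingDist, natCast_card_filter]
  refine sum_congr rfl fun j _ => ?_
  rcases ha j with h | h <;> rcases hb j with h' | h' <;> norm_num [h, h']

lemma mul_sum_mul_hammingDist_eq {κ ι : Type*} [Fintype κ] [Fintype ι]
    (hι : (Fintype.card ι : ℝ) ≠ 0) {y x : κ → ι → ℝ}
    (hy : ∀ i j, y i j = 1 ∨ y i j = -1) (hx : ∀ i j, x i j = 1 ∨ x i j = -1) (a : ℝ)
    (s : κ → ℝ) :
    a * ∑ i, s i * (hammingDist (y i) (x i) / Fintype.card ι) =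
      a / 2 * ∑ i, s i +
        1 / (2 * Fintype.card ι) * ∑ j, a * ∑ i, (-x i j * s i) * y i j := by
  have hrow : ∀ i, s i * (hammingDist (y i) (x i) / Fintype.card ι) =
      s i / 2 + 1 / (2 * Fintype.card ι) * ∑ j, (-x i j * s i) * y i j := by
    intro i
    have hsum : ∑ j, (-x i j * s i) * y i j = -s i * ∑ j, x i j * y i j := by
      rw [mul_sum]; exact sum_congr rfl fun j _ => by ring
    rw [hammingDist_eq_sum_of_sign (hy i) (hx i), ← sum_div, sum_sub_distrib, sum_const,
      card_univ, nsmul_one, hsum]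
    field_simp
    ring
  simp only [hrow, ← mul_sum, sum_add_distrib, ← sum_div]
  rw [sum_comm]
  ring

lemma setOf_exists_mem_eq_image {α β : Type*} (F : Set α) (φ : α → β) :
    {t | ∃ f ∈ F, t = φ f} = φ '' F := by
  ext t; simp [eq_comm]

lemma bddAbove_image_mul_sum_mul {α κ : Type*} [Fintype κ] (F : Set α) (a : ℝ) {c : κ → ℝ}
    (hc : ∀ i, |c i| ≤ 1) {g : α → κ → ℝ} (hg : ∀ f ∈ F, ∀ i, |g f i| ≤ 1) :
    BddAbove ((fun f => a * ∑ i, c i * g f i) '' F) := by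
  refine ⟨|a| * Fintype.card κ, ?_⟩
  rintro _ ⟨f, hf, rfl⟩
  calc a * ∑ i, c i * g f i ≤ |a| * |∑ i, c i * g f i| := by rw [← abs_mul]; exact le_abs_self _
    _ ≤ |a| * ∑ _i : κ, (1 : ℝ) := by
      gcongr
      refine (abs_sum_le_sum_abs _ _).trans (sum_le_sum fun i _ => ?_)
      rw [abs_mul]
      exact mul_le_one₀ (hc i) (abs_nonneg _) (hg f hf i)
    _ = |a| * Fintype.card κ := by simp

lemma csSup_image_le_add_mul_sum {α ι : Type*} [Fintype ι] {F : Set α} (hF : F.Nonempty)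
    {φ : α → ℝ} {c k : ℝ} (hk : 0 ≤ k) {ψ : ι → α → ℝ}
    (hφ : ∀ f ∈ F, φ f = c + k * ∑ j, ψ j f) (hψ : ∀ j, BddAbove (ψ j '' F)) :
    sSup (φ '' F) ≤ c + k * ∑ j, sSup (ψ j '' F) := by
  refine csSup_le (hF.image φ) ?_
  rintro _ ⟨f, hf, rfl⟩
  rw [hφ f hf]
  gcongr with j
  exact le_csSup (hψ j) (Set.mem_image_of_mem _ hf)

lemma csSup_image_mul_sum_mul_hammingDist_le {α κ ι : Type*} [Fintype κ] [Fintype ι]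
    (hι : (Fintype.card ι : ℝ) ≠ 0) {F : Set α} (hF : F.Nonempty) {y : α → κ → ι → ℝ}
    (hy : ∀ f ∈ F, ∀ i j, y f i j = 1 ∨ y f i j = -1) {x : κ → ι → ℝ}
    (hx : ∀ i j, x i j = 1 ∨ x i j = -1) (a : ℝ) (s : κ → ℝ)
    (hs : ∀ i, |s i| ≤ 1) :
    sSup ((fun f => a * ∑ i, s i * (hammingDist (y f i) (x i) / Fintype.card ι)) '' F) ≤
      a / 2 * ∑ i, s i + 1 / (2 * Fintype.card ι) *
        ∑ j, sSup ((fun f => a * ∑ i, (-x i j * s i) * y f i j) '' F) := by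
  have habs : ∀ {b : ℝ}, b = 1 ∨ b = -1 → |b| = 1 := fun h => (abs_eq zero_le_one).2 h
  refine csSup_image_le_add_mul_sum hF (by positivity)
    (fun f hf => mul_sum_mul_hammingDist_eq hι (hy f hf) hx a s) fun j => ?_
  refine bddAbove_image_mul_sum_mul F a (fun i => ?_) fun f hf i => (habs (hy f hf i j)).le
  rw [abs_mul, abs_neg, habs (hx i j), one_mul]
  exact hs i

theorem loss_rademacher_le_bitwise_general
    {Λ : Type*} (n m : ℕ) (hn : 0 < n)
    (F : Set (Λ → Fin n → ℝ)) (hF : F.Nonempty)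
    (hFpm : ∀ f ∈ F, ∀ lam j, f lam j = 1 ∨ f lam j = -1)
    (lam : Fin m → Λ) (x : Fin m → Fin n → ℝ)
    (hx : ∀ i j, x i j = 1 ∨ x i j = -1) :
    (1 / (2 : ℝ) ^ m) *
      ∑ σ : Fin m → Bool,
        sSup {t : ℝ | ∃ f ∈ F, t = (1 / (m : ℝ)) * ∑ i,
          sgn (σ i) *
            (((Finset.univ.filter (fun j => f (lam i) j ≠ x i j)).card : ℝ) / n)} ≤
    (1 / (2 * (n : ℝ))) * ∑ j : Fin n,
      (1 / (2 : ℝ) ^ m) *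
        ∑ σ : Fin m → Bool,
          sSup {t : ℝ | ∃ f ∈ F, t = (1 / (m : ℝ)) * ∑ i, sgn (σ i) * f (lam i) j} := by
  simp only [setOf_exists_mem_eq_image]
  have hloss (σ : Fin m → Bool) :=
    csSup_image_mul_sum_mul_hammingDist_le (y := fun f i => f (lam i)) (by simp [hn.ne']) hF
      (fun f hf i j => hFpm f hf (lam i) j) hx (1 / (m : ℝ)) (fun i => sgn (σ i))
      (fun i => (abs_sgn _).le)
  have hflip (j : Fin n) := sum_mul_sgn_eq (fun i => -x i j)
    (fun i => by rcases hx i j with h | h <;> simp [h])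
    (fun v => sSup ((fun f => 1 / (m : ℝ) * ∑ i, v i * f (lam i) j) '' F))
  have hcentre : ∑ σ : Fin m → Bool, ∑ i, sgn (σ i) = 0 := by
    rw [sum_comm]; exact sum_eq_zero fun i _ => sum_sgn_eq_zero i
  simp only [Fintype.card_fin] at hloss
  calc _ ≤ 1 / (2 : ℝ) ^ m * ∑ σ : Fin m → Bool, (1 / (m : ℝ) / 2 * ∑ i, sgn (σ i) +
          1 / (2 * (n : ℝ)) * ∑ j,
            sSup ((fun f => 1 / (m : ℝ) * ∑ i, (-x i j * sgn (σ i)) * f (lam i) j) '' F)) := by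
        gcongr with σ; exact hloss σ
    _ = _ := by
        rw [sum_add_distrib, ← mul_sum, hcentre, ← mul_sum, sum_comm]
        simp only [hflip, ← mul_sum]
        ring

theorem loss_rademacher_le_bitwise
    {Λ : Type*} (n m : ℕ) (hn : 0 < n) (hm : 0 < m)
    (F : Set (Λ → Fin n → ℝ)) (hF : F.Nonempty)
    (hFpm : ∀ f ∈ F, ∀ lam j, f lam j = 1 ∨ f lam j = -1)
    (lam : Fin m → Λ) (x : Fin m → Fin n → ℝ)
    (hx : ∀ i j, x i j = 1 ∨ x i j = -1) :
    (1 / (2 : ℝ) ^ m) *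
      ∑ σ : Fin m → Bool,
        sSup {t : ℝ | ∃ f ∈ F, t = (1 / (m : ℝ)) * ∑ i,
          sgn (σ i) *
            (((Finset.univ.filter (fun j => f (lam i) j ≠ x i j)).card : ℝ) / n)} ≤
    (1 / (2 * (n : ℝ))) * ∑ j : Fin n,
      (1 / (2 : ℝ) ^ m) *
        ∑ σ : Fin m → Bool,
          sSup {t : ℝ | ∃ f ∈ F, t = (1 / (m : ℝ)) * ∑ i, sgn (σ i) * f (lam i) j} :=
  loss_rademacher_le_bitwise_general n m hn F hF hFpm lam x hx
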